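/- arXiv:1911.07782 — 2 statements merged into one kernel-verified Lean document; each statement's English description precedes it below -/
import Mathlib

section
/- For an n-qubit density matrix ρ, (1/4^n) ∑_{a,b ∈ {0,1}^n} X^a Z^b ρ Z^b X^a = I/2^n, where X^a = X^{a_1} ⊗ ⋯ ⊗ X^{a_n} and Z^b = Z^{b_1} ⊗ ⋯ ⊗ Z^{b_n}. -/
/-!
Conjugating by `Z^b = diag((-1)^(b·x))` multiplies the entry `ρ x y` by `(-1)^(b·(x+y))`, and these
characters of `(ℤ/2)^n` are orthogonal, so averaging over `b` leaves only the diagonal of `ρ`.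
Conjugating a diagonal matrix by `X^a` translates its diagonal by `a`, so averaging over `a`
spreads the trace of `ρ` evenly over the diagonal.
-/

open Matrix
open scoped ComplexOrder

/-- The Pauli `X` matrix. -/
noncomputable def pauliX : Matrix (Fin 2) (Fin 2) ℂ := !![0, 1; 1, 0]

/-- The Pauli `Z` matrix. -/
noncomputable def pauliZ : Matrix (Fin 2) (Fin 2) ℂ := !![1, 0; 0, -1]

/-- `X^a = X^{a_1} ⊗ ⋯ ⊗ X^{a_n}` for a bit string `a`. -/
noncomputable def Xstring {n : ℕ} (a : Fin n → Fin 2) :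
    Matrix (Fin n → Fin 2) (Fin n → Fin 2) ℂ :=
  fun x y => ∏ i, (pauliX ^ ((a i : ℕ))) (x i) (y i)

/-- `Z^b = Z^{b_1} ⊗ ⋯ ⊗ Z^{b_n}` for a bit string `b`. -/
noncomputable def Zstring {n : ℕ} (b : Fin n → Fin 2) :
    Matrix (Fin n → Fin 2) (Fin n → Fin 2) ℂ :=
  fun x y => ∏ i, (pauliZ ^ ((b i : ℕ))) (x i) (y i)

open Finset

lemma Fintype.prod_ite_eq_apply_zero {ι β M : Type*} [Fintype ι] [CommMonoidWithZero M]
    [DecidableEq β] (u v : ι → β) (c : ι → M) :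
    (∏ i, if u i = v i then c i else 0) = if u = v then ∏ i, c i else 0 := by
  simp only [Fintype.prod_ite_zero, ← funext_iff]

lemma pauliX_pow_apply (c x y : Fin 2) :
    (pauliX ^ (c : ℕ)) x y = if y = x + c then 1 else 0 := by
  fin_cases c <;> fin_cases x <;> fin_cases y <;> simp [pauliX, one_apply]

lemma pauliZ_pow_apply (c x y : Fin 2) :
    (pauliZ ^ (c : ℕ)) x y = if y = x then (-1) ^ ((c : ℕ) * x) else 0 := by
  fin_cases c <;> fin_cases x <;> fin_cases y <;> simp [pauliZ, one_apply]

lemma pi_fin_two_add_add_cancel {ι : Type*} (x a : ι → Fin 2) : x + a + a = x := by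
  funext i
  have h : ∀ c d : Fin 2, c + d + d = c := by decide
  exact h (x i) (a i)

section BitStrings

variable {n : ℕ}

noncomputable def paritySign (b x : Fin n → Fin 2) : ℂ :=
  ∏ i, (-1 : ℂ) ^ ((b i : ℕ) * x i)

lemma sum_paritySign_mul_paritySign (u v : Fin n → Fin 2) :
    ∑ b, paritySign b u * paritySign b v = if u = v then 2 ^ n else 0 := by
  have single (w z : Fin 2) :
      ∑ c : Fin 2, (-1 : ℂ) ^ ((c : ℕ) * w) * (-1) ^ ((c : ℕ) * z) = if w = z then 2 else 0 := by
    fin_cases w <;> fin_cases z <;> norm_num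
  calc ∑ b, paritySign b u * paritySign b v
      = ∏ i, ∑ c : Fin 2, (-1 : ℂ) ^ ((c : ℕ) * u i) * (-1) ^ ((c : ℕ) * v i) := by
        simp only [Fintype.prod_sum, paritySign, ← prod_mul_distrib]
    _ = if u = v then 2 ^ n else 0 := by
        simp only [single, Fintype.prod_ite_eq_apply_zero, prod_const, card_univ,
          Fintype.card_fin]

lemma Xstring_apply (a x y : Fin n → Fin 2) :
    Xstring a x y = if y = x + a then 1 else 0 := by
  simp only [Xstring, pauliX_pow_apply, Fintype.prod_ite_eq_apply_zero, prod_const_one]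
  rfl

lemma Zstring_eq_diagonal (b : Fin n → Fin 2) : Zstring b = diagonal (paritySign b) := by
  ext x y
  simp only [Zstring, pauliZ_pow_apply, Fintype.prod_ite_eq_apply_zero, diagonal_apply,
    paritySign, eq_comm]

variable (M : Matrix (Fin n → Fin 2) (Fin n → Fin 2) ℂ)

lemma Xstring_mul_apply (a x y : Fin n → Fin 2) : (Xstring a * M) x y = M (x + a) y := by
  simp [mul_apply, Xstring_apply]

lemma mul_Xstring_apply (a x y : Fin n → Fin 2) : (M * Xstring a) x y = M x (y + a) := by
  have h (z : Fin n → Fin 2) : y = z + a ↔ z = y + a := by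
    constructor <;> rintro rfl <;> rw [pi_fin_two_add_add_cancel]
  simp [mul_apply, Xstring_apply, h]

lemma sum_Zstring_conj :
    ∑ b, Zstring b * M * Zstring b = (2 ^ n : ℂ) • diagonal (fun x => M x x) := by
  ext x y
  simp only [Matrix.sum_apply, Zstring_eq_diagonal, diagonal_mul, mul_diagonal, Matrix.smul_apply,
    diagonal_apply, smul_eq_mul]
  have hfactor (b : Fin n → Fin 2) :
      paritySign b x * M x y * paritySign b y = M x y * (paritySign b x * paritySign b y) := by
    ring
  rw [sum_congr rfl fun b _ => hfactor b, ← mul_sum, sum_paritySign_mul_paritySign]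
  split_ifs with h <;> simp [h, mul_comm]

lemma sum_Xstring_conj_diagonal (d : (Fin n → Fin 2) → ℂ) :
    ∑ a, Xstring a * diagonal d * Xstring a = (∑ x, d x) • 1 := by
  ext x y
  simp only [Matrix.sum_apply, mul_Xstring_apply, Xstring_mul_apply, diagonal_apply, add_left_inj,
    Matrix.smul_apply, one_apply, smul_eq_mul]
  split_ifs with h
  · simpa [h] using Equiv.sum_comp (Equiv.addLeft y) d
  · simp

lemma sum_Xstring_Zstring_conj :
    ∑ a, ∑ b, Xstring a * Zstring b * M * Zstring b * Xstring a
      = ((2 : ℂ) ^ n * M.trace) • 1 := by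
  have hassoc (a b : Fin n → Fin 2) : Xstring a * Zstring b * M * Zstring b * Xstring a
      = Xstring a * (Zstring b * M * Zstring b) * Xstring a := by
    simp only [Matrix.mul_assoc]
  simp only [hassoc, ← sum_mul, ← mul_sum, sum_Zstring_conj, Matrix.mul_smul, Matrix.smul_mul,
    ← smul_sum, sum_Xstring_conj_diagonal, smul_smul, trace, Matrix.diag]

end BitStrings

theorem qotp_n_qubits_general {n : ℕ} (ρ : Matrix (Fin n → Fin 2) (Fin n → Fin 2) ℂ)
    (hρ1 : ρ.trace = 1) :
    ((1 : ℂ) / 4 ^ n) • ∑ a : Fin n → Fin 2, ∑ b : Fin n → Fin 2,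
        Xstring a * Zstring b * ρ * Zstring b * Xstring a
      = ((1 : ℂ) / 2 ^ n) • (1 : Matrix (Fin n → Fin 2) (Fin n → Fin 2) ℂ) := by
  rw [sum_Xstring_Zstring_conj, hρ1, smul_smul]
  congr 1
  rw [show (4 : ℂ) ^ n = 2 ^ n * 2 ^ n by rw [← mul_pow]; norm_num]
  field_simp

/-- Perfect security of the `n`-qubit quantum one-time pad:
`(1/4^n) ∑_{a,b ∈ {0,1}^n} X^a Z^b ρ Z^b X^a = I/2^n` for every density matrix `ρ`. -/
theorem qotp_n_qubits {n : ℕ} (ρ : Matrix (Fin n → Fin 2) (Fin n → Fin 2) ℂ)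
    (hρ : ρ.PosSemidef) (hρ1 : ρ.trace = 1) :
    ((1 : ℂ) / 4 ^ n) • ∑ a : Fin n → Fin 2, ∑ b : Fin n → Fin 2,
        Xstring a * Zstring b * ρ * Zstring b * Xstring a
      = ((1 : ℂ) / 2 ^ n) • (1 : Matrix (Fin n → Fin 2) (Fin n → Fin 2) ℂ) :=
  qotp_n_qubits_general ρ hρ1
end

section
/- Let |ψ⟩ and |φ⟩ be pure states and ρ₀, ρ₁ quantum states such that for all k there is a channel mapping |ψ⟩ to ρ₀^{⊗k} and |φ⟩ to ρ₁^{⊗k}. If ρ₀ ≠ ρ₁, then for every ε > 0 there is a measurement distinguishing |ψ⟩ from |φ⟩ (equiprobable) with success probability at least 1 − ε. Consequently, if |⟨ψ|φ⟩|² = 1/2, this contradicts the Helstrom bound, so ρ₀ = ρ₁. -/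
set_option linter.unusedSectionVars false
open Matrix
open scoped ComplexOrder

variable {n : Type*} [Fintype n] [DecidableEq n]

open scoped MatrixOrder Matrix.Norms.L2Operator in
lemma psd_eq_ct_mul_self {A : Matrix n n ℂ} (hA : A.PosSemidef) :
    ∃ B : Matrix n n ℂ, A = Bᴴ * B := by
  obtain ⟨B, hB⟩ := CStarAlgebra.nonneg_iff_eq_star_mul_self.mp hA.nonneg
  exact ⟨B, hB⟩

lemma psd_trace_nonneg {P : Matrix n n ℂ} (hP : P.PosSemidef) : 0 ≤ P.trace := by
  unfold Matrix.trace
  refine Finset.sum_nonneg fun i _ => ?_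
  simpa [Matrix.mulVec_single, dotProduct, Pi.single_apply] using hP.dotProduct_mulVec_nonneg (Pi.single i 1)

lemma trace_mul_psd_nonneg {P Q : Matrix n n ℂ} (hP : P.PosSemidef) (hQ : Q.PosSemidef) :
    0 ≤ (P * Q).trace := by
  obtain ⟨B, rfl⟩ := psd_eq_ct_mul_self hP
  rw [Matrix.mul_assoc, Matrix.trace_mul_comm]
  exact psd_trace_nonneg (hQ.mul_mul_conjTranspose_same B)

lemma herm_trace_mul_real {X Y : Matrix n n ℂ} (hX : X.IsHermitian) (hY : Y.IsHermitian) :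
    ((X * Y).trace).im = 0 := by
  have h : star ((X * Y).trace) = (X * Y).trace := by
    rw [← Matrix.trace_conjTranspose, Matrix.conjTranspose_mul, hX.eq, hY.eq,
      Matrix.trace_mul_comm]
  have := congrArg Complex.im h
  simp at this
  linarith

lemma quadform_eq_trace (A : Matrix n n ℂ) (x : n → ℂ) :
    dotProduct (star x) (A *ᵥ x) = (A * Matrix.vecMulVec x (star x)).trace := by
  simp only [Matrix.trace, Matrix.diag, Matrix.mul_apply, Matrix.vecMulVec_apply,
    dotProduct, Matrix.mulVec, dotProduct, Pi.star_apply]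
  congr 1; ext i
  rw [Finset.mul_sum]
  congr 1; ext j
  ring

lemma psd_vecMulVec (x : n → ℂ) : (Matrix.vecMulVec x (star x)).PosSemidef := by
  have : Matrix.vecMulVec x (star x) = (Matrix.replicateRow Unit (star x))ᴴ * (Matrix.replicateRow Unit (star x)) := by
    ext i j
    simp [Matrix.mul_apply, Matrix.vecMulVec_apply, mul_comm]
  rw [this]
  exact Matrix.posSemidef_conjTranspose_mul_self _
open scoped ComplexOrder

/-- The `k`-fold tensor power of a matrix `ρ`. -/
noncomputable def tensPow {d : ℕ} (ρ : Matrix (Fin d) (Fin d) ℂ) (k : ℕ) :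
    Matrix (Fin k → Fin d) (Fin k → Fin d) ℂ :=
  fun x y => ∏ i, ρ (x i) (y i)

noncomputable def tens {d k : ℕ} (f : Fin k → Matrix (Fin d) (Fin d) ℂ) :
    Matrix (Fin k → Fin d) (Fin k → Fin d) ℂ :=
  Matrix.of fun x y => ∏ i, f i (x i) (y i)

lemma tensPow_eq_tens {d k : ℕ} (ρ : Matrix (Fin d) (Fin d) ℂ) :
    tensPow ρ k = tens (fun _ => ρ) := rfl

lemma tens_mul {d k : ℕ} (f g : Fin k → Matrix (Fin d) (Fin d) ℂ) :
    tens f * tens g = tens (fun i => f i * g i) := by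
  ext x y
  simp only [tens, Matrix.mul_apply, Matrix.of_apply]
  rw [Finset.prod_univ_sum, Fintype.piFinset_univ]
  exact Finset.sum_congr rfl fun z _ => (Finset.prod_mul_distrib).symm

lemma tens_trace {d k : ℕ} (f : Fin k → Matrix (Fin d) (Fin d) ℂ) :
    (tens f).trace = ∏ i, (f i).trace := by
  simp only [Matrix.trace, Matrix.diag, tens, Matrix.of_apply]
  rw [Finset.prod_univ_sum, Fintype.piFinset_univ]

lemma tens_conjTranspose {d k : ℕ} (f : Fin k → Matrix (Fin d) (Fin d) ℂ) :
    (tens f)ᴴ = tens (fun i => (f i)ᴴ) := by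
  ext x y
  simp [tens, Matrix.conjTranspose_apply]

noncomputable def siteOp {d k : ℕ} (A : Matrix (Fin d) (Fin d) ℂ) (i : Fin k) :
    Matrix (Fin k → Fin d) (Fin k → Fin d) ℂ :=
  tens (fun j => if j = i then A else 1)

lemma siteOp_isHermitian {d k : ℕ} {A : Matrix (Fin d) (Fin d) ℂ} (hA : A.IsHermitian)
    (i : Fin k) : (siteOp A i).IsHermitian := by
  unfold Matrix.IsHermitian
  rw [siteOp, tens_conjTranspose]
  have : (fun j : Fin k => (if j = i then A else 1)ᴴ) = fun j => if j = i then A else 1 := by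
    funext j; split <;> simp [hA.eq]
  rw [this]

lemma trace_site_mul_tensPow {d k : ℕ} (A ρ : Matrix (Fin d) (Fin d) ℂ) (hρ : ρ.trace = 1)
    (i : Fin k) : (siteOp A i * tensPow ρ k).trace = (A * ρ).trace := by
  rw [tensPow_eq_tens, siteOp, tens_mul, tens_trace]
  rw [Finset.prod_eq_single i (fun j _ hj => by simp [hj, hρ]) (by simp)]
  simp

lemma trace_site_site_mul_tensPow {d k : ℕ} (A B ρ : Matrix (Fin d) (Fin d) ℂ)
    (hρ : ρ.trace = 1) (i j : Fin k) :
    (siteOp A i * (siteOp B j * tensPow ρ k)).trace =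
      if i = j then (A * (B * ρ)).trace else (A * ρ).trace * (B * ρ).trace := by
  rw [tensPow_eq_tens, siteOp, siteOp, tens_mul, tens_mul, tens_trace]
  by_cases hij : i = j
  · subst hij
    simp only [if_pos rfl]
    rw [Finset.prod_eq_single i (fun l _ hl => by simp [hl, hρ]) (by simp)]
    simp
  · simp only [if_neg hij]
    have : ∀ l : Fin k, ((if l = i then A else 1) * ((if l = j then B else 1) * ρ)).trace
        = (if l = i then (A * ρ).trace else 1) * (if l = j then (B * ρ).trace else 1) := by
      intro l
      by_cases h1 : l = i
      · subst h1
        simp [if_neg hij]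
      · by_cases h2 : l = j
        · subst h2; simp [h1, Ne.symm hij, hρ]
        · simp [h1, h2, hρ]
    rw [Finset.prod_congr rfl (fun l _ => this l), Finset.prod_mul_distrib,
      Finset.prod_eq_single i (fun l _ hl => by simp [hl]) (by simp),
      Finset.prod_eq_single j (fun l _ hl => by simp [hl]) (by simp)]
    simp

lemma trace_S_mul_tensPow {d k : ℕ} (A ρ : Matrix (Fin d) (Fin d) ℂ) (hρ : ρ.trace = 1) :
    ((∑ i : Fin k, siteOp A i) * tensPow ρ k).trace = (k : ℂ) * (A * ρ).trace := by
  rw [Finset.sum_mul, Matrix.trace_sum]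
  rw [Finset.sum_congr rfl (fun i _ => trace_site_mul_tensPow A ρ hρ i)]
  simp [mul_comm]

lemma trace_S_S_mul_tensPow {d k : ℕ} (A ρ : Matrix (Fin d) (Fin d) ℂ) (hρ : ρ.trace = 1) :
    ((∑ i : Fin k, siteOp A i) * ((∑ i : Fin k, siteOp A i) * tensPow ρ k)).trace =
      (k : ℂ) * (A * (A * ρ)).trace + ((k : ℂ)^2 - k) * ((A * ρ).trace)^2 := by
  have expand : (∑ i : Fin k, siteOp A i) * ((∑ i : Fin k, siteOp A i) * tensPow ρ k)
      = ∑ i : Fin k, ∑ j : Fin k, siteOp A i * (siteOp A j * tensPow ρ k) := by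
    simp only [Finset.sum_mul, Finset.mul_sum]
    rw [Finset.sum_comm]
  rw [expand, Matrix.trace_sum]
  have h1 : ∀ i : Fin k, (∑ j : Fin k, siteOp A i * (siteOp A j * tensPow ρ k)).trace
      = (A * (A * ρ)).trace + ((k:ℂ) - 1) * ((A*ρ).trace)^2 := by
    intro i
    rw [Matrix.trace_sum]
    have h2 : ∀ j : Fin k, (siteOp A i * (siteOp A j * tensPow ρ k)).trace
        = ((A*ρ).trace)^2 + (if j = i then ((A*(A*ρ)).trace - ((A*ρ).trace)^2) else 0) := by
      intro j
      rw [trace_site_site_mul_tensPow A A ρ hρ i j]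
      by_cases h : i = j
      · subst h; simp
      · rw [if_neg h, if_neg (Ne.symm h)]
        rw [sq]; ring
    rw [Finset.sum_congr rfl (fun j _ => h2 j), Finset.sum_add_distrib,
      Finset.sum_ite_eq' Finset.univ i, Finset.sum_const, Finset.card_univ, Fintype.card_fin]
    simp only [Finset.mem_univ, if_pos, nsmul_eq_mul]
    ring
  rw [Finset.sum_congr rfl (fun i _ => h1 i), Finset.sum_const, Finset.card_univ,
    Fintype.card_fin, nsmul_eq_mul]
  ring

section Conj
variable {ι : Type*} [Fintype ι] [DecidableEq ι]

noncomputable def conjD (U : Matrix ι ι ℂ) (g : ι → ℝ) : Matrix ι ι ℂ :=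
  U * Matrix.diagonal (fun i => (g i : ℂ)) * star U

lemma conjD_psd (U : Matrix ι ι ℂ) {g : ι → ℝ} (hg : ∀ i, 0 ≤ g i) : (conjD U g).PosSemidef := by
  rw [conjD, Matrix.star_eq_conjTranspose]
  exact (Matrix.posSemidef_diagonal_iff.mpr fun i =>
    Complex.zero_le_real.mpr (hg i)).mul_mul_conjTranspose_same U

lemma conjD_sub (U : Matrix ι ι ℂ) (g h : ι → ℝ) :
    conjD U g - conjD U h = conjD U (g - h) := by
  unfold conjD
  rw [← Matrix.sub_mul, ← Matrix.mul_sub]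
  congr 2
  ext i j
  by_cases h' : i = j <;> simp [Matrix.diagonal_apply, h']

lemma conjD_add (U : Matrix ι ι ℂ) (g h : ι → ℝ) :
    conjD U g + conjD U h = conjD U (g + h) := by
  unfold conjD
  rw [← Matrix.add_mul, ← Matrix.mul_add]
  congr 2
  ext i j
  by_cases h' : i = j <;> simp [Matrix.diagonal_apply, h']

lemma conjD_smul (U : Matrix ι ι ℂ) (r : ℝ) (g : ι → ℝ) :
    (r : ℂ) • conjD U g = conjD U (r • g) := by
  unfold conjD
  rw [← smul_mul_assoc, ← mul_smul_comm]
  congr 2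
  ext i j
  by_cases h' : i = j <;> simp [Matrix.diagonal_apply, h']

lemma conjD_mul (U : Matrix ι ι ℂ) (hU2 : star U * U = 1) (g h : ι → ℝ) :
    conjD U g * conjD U h = conjD U (fun i => g i * h i) := by
  unfold conjD
  have : U * Matrix.diagonal (fun i => (g i : ℂ)) * star U *
      (U * Matrix.diagonal (fun i => (h i : ℂ)) * star U)
      = U * (Matrix.diagonal (fun i => (g i : ℂ)) * (star U * U) *
          Matrix.diagonal (fun i => (h i : ℂ))) * star U := by
    simp only [Matrix.mul_assoc]
  rw [this, hU2, Matrix.mul_one, Matrix.diagonal_mul_diagonal]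
  congr 1
  ext i
  simp

lemma conjD_one (U : Matrix ι ι ℂ) (hU1 : U * star U = 1) :
    conjD U (fun _ => 1) = 1 := by
  unfold conjD
  have : Matrix.diagonal (fun _ : ι => ((1 : ℝ) : ℂ)) = 1 := by
    simp
  rw [this, Matrix.mul_one, hU1]

lemma trace_re_mono {X Y R : Matrix ι ι ℂ} (hR : R.PosSemidef) (h : (Y - X).PosSemidef) :
    ((X * R).trace).re ≤ ((Y * R).trace).re := by
  have h0 := trace_mul_psd_nonneg h hR
  rw [Matrix.sub_mul, Matrix.trace_sub] at h0
  have := (Complex.nonneg_iff.mp h0).1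
  rw [Complex.sub_re] at this
  linarith

end Conj

lemma tensPow_psd {d k : ℕ} {ρ : Matrix (Fin d) (Fin d) ℂ} (hρ : ρ.PosSemidef) :
    (tensPow ρ k).PosSemidef := by
  obtain ⟨B, rfl⟩ := psd_eq_ct_mul_self hρ
  have : tensPow (Bᴴ * B) k = (tens (fun _ : Fin k => B))ᴴ * tens (fun _ => B) := by
    rw [tens_conjTranspose, tens_mul, tensPow_eq_tens]
  rw [this]
  exact Matrix.posSemidef_conjTranspose_mul_self _

lemma trace_tensPow {d k : ℕ} {ρ : Matrix (Fin d) (Fin d) ℂ} (hρ : ρ.trace = 1) :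
    (tensPow ρ k).trace = 1 := by
  rw [tensPow_eq_tens, tens_trace]
  simp [hρ]

set_option maxHeartbeats 1000000 in
lemma measurement_exists {d : ℕ} {A ρ₀ ρ₁ : Matrix (Fin d) (Fin d) ℂ} (hA : A.IsHermitian)
    (hρ₀ : ρ₀.PosSemidef) (h01 : ρ₀.trace = 1) (hρ₁ : ρ₁.PosSemidef) (h11 : ρ₁.trace = 1)
    {a b τ₀ τ₁ : ℝ} (ha : (A * ρ₀).trace = (a : ℂ)) (hb : (A * ρ₁).trace = (b : ℂ))
    (hτ₀ : (A * (A * ρ₀)).trace = (τ₀ : ℂ)) (hτ₁ : (A * (A * ρ₁)).trace = (τ₁ : ℂ))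
    (hba : b < a) (k : ℕ) (hk : 0 < k) :
    ∃ N : Matrix (Fin k → Fin d) (Fin k → Fin d) ℂ,
      N.PosSemidef ∧ ((1 : Matrix _ _ ℂ) - N).PosSemidef ∧
      (((1 - N) * tensPow ρ₀ k).trace).re ≤ (τ₀ - a^2) / (k * ((a-b)/2)^2) ∧
      ((N * tensPow ρ₁ k).trace).re ≤ (τ₁ - b^2) / (k * ((a-b)/2)^2) := by
  have hkR : (0:ℝ) < (k:ℝ) := by exact_mod_cast hk
  set c : ℝ := (a - b)/2 with hcdef
  have hcpos : 0 < c := by simp only [hcdef]; linarith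
  set S : Matrix (Fin k → Fin d) (Fin k → Fin d) ℂ := ∑ i : Fin k, siteOp A i with hSdef
  have hS : S.IsHermitian := by
    unfold Matrix.IsHermitian
    rw [hSdef, Matrix.conjTranspose_sum]
    exact Finset.sum_congr rfl fun i _ => siteOp_isHermitian hA i
  set U : Matrix (Fin k → Fin d) (Fin k → Fin d) ℂ := ((Matrix.IsHermitian.eigenvectorUnitary hS : Matrix (Fin k → Fin d) (Fin k → Fin d) ℂ))
    with hUdef
  have hU1 : U * star U = 1 := Matrix.mem_unitaryGroup_iff.mp (Matrix.IsHermitian.eigenvectorUnitary hS).property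
  have hU2 : star U * U = 1 := Matrix.mem_unitaryGroup_iff'.mp (Matrix.IsHermitian.eigenvectorUnitary hS).property
  set μ : (Fin k → Fin d) → ℝ := hS.eigenvalues with hμdef
  have hspec : S = conjD U μ := hS.spectral_theorem
  set T : ℝ := (k:ℝ) * ((a+b)/2) with hTdef
  set ind : (Fin k → Fin d) → ℝ := fun i => if T ≤ μ i then 1 else 0 with hinddef
  have hind0 : ∀ i, 0 ≤ ind i := by
    intro i; simp only [hinddef]; split <;> norm_num
  have hind1 : ∀ i, ind i ≤ 1 := by
    intro i; simp only [hinddef]; split <;> norm_num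
  set N := conjD U ind with hNdef
  have hNpsd : N.PosSemidef := conjD_psd U hind0
  have honeN : (1 : Matrix (Fin k → Fin d) (Fin k → Fin d) ℂ) - N
      = conjD U (fun i => 1 - ind i) := by
    rw [hNdef, ← conjD_one U hU1, conjD_sub]
    rfl
  have h1Npsd : ((1 : Matrix (Fin k → Fin d) (Fin k → Fin d) ℂ) - N).PosSemidef := by
    rw [honeN]
    exact conjD_psd U (fun i => by linarith [hind1 i])
  -- expansion of the quadratic observable
  have hexpand : ∀ e : ℝ, conjD U (fun i => (μ i - (k:ℝ)*e)^2)
      = S * S - (((2*(k:ℝ)*e : ℝ)) : ℂ) • S + ((((k:ℝ)*e)^2 : ℝ) : ℂ) • 1 := by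
    intro e
    have e1 : S * S = conjD U (fun i => μ i * μ i) := by rw [hspec, conjD_mul U hU2]
    have e2 : (((2*(k:ℝ)*e : ℝ)) : ℂ) • S = conjD U ((2*(k:ℝ)*e) • μ) := by
      rw [hspec, conjD_smul]
    have e3 : ((((k:ℝ)*e)^2 : ℝ) : ℂ) • (1 : Matrix (Fin k → Fin d) (Fin k → Fin d) ℂ)
        = conjD U ((((k:ℝ)*e)^2) • (fun _ : Fin k → Fin d => (1:ℝ))) := by
      rw [← conjD_one U hU1, conjD_smul]
    rw [e1, e2, e3, conjD_sub, conjD_add]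
    refine congrArg (conjD U) ?_
    funext i
    simp only [Pi.add_apply, Pi.sub_apply, Pi.smul_apply, smul_eq_mul]
    ring
  -- trace of the quadratic observable against tensor powers
  have htrace : ∀ (e : ℝ) (ρ : Matrix (Fin d) (Fin d) ℂ) (τ v : ℝ), ρ.trace = 1 →
      (A * ρ).trace = (v : ℂ) → (A * (A * ρ)).trace = (τ : ℂ) →
      ((conjD U (fun i => (μ i - (k:ℝ)*e)^2)) * tensPow ρ k).trace
        = (((k:ℝ) * τ + ((k:ℝ)^2 - k) * v^2 - 2*(k:ℝ)*e*((k:ℝ)*v) + ((k:ℝ)*e)^2 : ℝ) : ℂ) := by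
    intro e ρ τ v hρtr hv hτ
    rw [hexpand e, Matrix.add_mul, Matrix.sub_mul, Matrix.smul_mul, Matrix.smul_mul,
      Matrix.trace_add, Matrix.trace_sub, Matrix.trace_smul, Matrix.trace_smul,
      Matrix.one_mul, Matrix.mul_assoc, hSdef, trace_S_S_mul_tensPow A ρ hρtr,
      trace_S_mul_tensPow A ρ hρtr, trace_tensPow hρtr, hv, hτ]
    simp only [smul_eq_mul]
    push_cast
    ring
  refine ⟨N, hNpsd, h1Npsd, ?_, ?_⟩
  · -- bound for ρ₀
    have hptw : ∀ i, ((k:ℝ)*c)^2 * (1 - ind i) ≤ (μ i - (k:ℝ)*a)^2 := by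
      intro i
      simp only [hinddef]
      split
      · simp [sq_nonneg]
      · rename_i hlt
        push_neg at hlt
        have hTa : T - (k:ℝ)*a = -((k:ℝ)*c) := by rw [hTdef, hcdef]; ring
        have h1 : μ i - (k:ℝ)*a < -((k:ℝ)*c) := by linarith
        have h2 : 0 < (k:ℝ)*c := mul_pos hkR hcpos
        nlinarith
    have hdiff : ((conjD U (fun i => (μ i - (k:ℝ)*a)^2))
        - ((((k:ℝ)*c)^2 : ℝ) : ℂ) • ((1 : Matrix (Fin k → Fin d) (Fin k → Fin d) ℂ) - N)).PosSemidef := by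
      rw [honeN, conjD_smul, conjD_sub]
      exact conjD_psd U (fun i => by
        simp only [Pi.sub_apply, Pi.smul_apply, smul_eq_mul]
        linarith [hptw i])
    have hmono := trace_re_mono (tensPow_psd hρ₀) hdiff
    rw [Matrix.smul_mul, Matrix.trace_smul] at hmono
    have hval := htrace a ρ₀ τ₀ a h01 ha hτ₀
    rw [hval] at hmono
    have hre : ((((((k:ℝ)*c)^2 : ℝ)) : ℂ) • (((1 - N) * tensPow ρ₀ k).trace)).re
        = ((k:ℝ)*c)^2 * (((1 - N) * tensPow ρ₀ k).trace).re := by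
      rw [smul_eq_mul, Complex.re_ofReal_mul]
    rw [hre, Complex.ofReal_re] at hmono
    have hval2 : (k:ℝ) * τ₀ + ((k:ℝ)^2 - k) * a^2 - 2*(k:ℝ)*a*((k:ℝ)*a) + ((k:ℝ)*a)^2
        = (k:ℝ) * (τ₀ - a^2) := by ring
    rw [hval2] at hmono
    rw [le_div_iff₀ (by positivity)]
    have h9 : (k:ℝ) * ((((1 - N) * tensPow ρ₀ k).trace).re * ((k:ℝ)*c^2))
        ≤ (k:ℝ) * (τ₀ - a^2) := by nlinarith [hmono]
    exact le_of_mul_le_mul_left h9 hkR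
  · -- bound for ρ₁
    have hptw : ∀ i, ((k:ℝ)*c)^2 * ind i ≤ (μ i - (k:ℝ)*b)^2 := by
      intro i
      simp only [hinddef]
      split
      · rename_i hge
        have hTb : T - (k:ℝ)*b = (k:ℝ)*c := by rw [hTdef, hcdef]; ring
        have h1 : (k:ℝ)*c ≤ μ i - (k:ℝ)*b := by linarith
        have h2 : 0 < (k:ℝ)*c := mul_pos hkR hcpos
        nlinarith
      · simp [sq_nonneg]
    have hdiff : ((conjD U (fun i => (μ i - (k:ℝ)*b)^2))
        - ((((k:ℝ)*c)^2 : ℝ) : ℂ) • N).PosSemidef := by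
      rw [hNdef, conjD_smul, conjD_sub]
      exact conjD_psd U (fun i => by
        simp only [Pi.sub_apply, Pi.smul_apply, smul_eq_mul]
        linarith [hptw i])
    have hmono := trace_re_mono (tensPow_psd hρ₁) hdiff
    rw [Matrix.smul_mul, Matrix.trace_smul] at hmono
    have hval := htrace b ρ₁ τ₁ b h11 hb hτ₁
    rw [hval] at hmono
    have hre : ((((((k:ℝ)*c)^2 : ℝ)) : ℂ) • ((N * tensPow ρ₁ k).trace)).re
        = ((k:ℝ)*c)^2 * ((N * tensPow ρ₁ k).trace).re := by
      rw [smul_eq_mul, Complex.re_ofReal_mul]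
    rw [hre, Complex.ofReal_re] at hmono
    have hval2 : (k:ℝ) * τ₁ + ((k:ℝ)^2 - k) * b^2 - 2*(k:ℝ)*b*((k:ℝ)*b) + ((k:ℝ)*b)^2
        = (k:ℝ) * (τ₁ - b^2) := by ring
    rw [hval2] at hmono
    rw [le_div_iff₀ (by positivity)]
    have h9 : (k:ℝ) * (((N * tensPow ρ₁ k).trace).re * ((k:ℝ)*c^2))
        ≤ (k:ℝ) * (τ₁ - b^2) := by nlinarith [hmono]
    exact le_of_mul_le_mul_left h9 hkR

lemma star_quadform {n : Type*} [Fintype n] [DecidableEq n] (A : Matrix n n ℂ) (x : n → ℂ) :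
    star (dotProduct (star x) (A *ᵥ x)) = dotProduct (star x) (Aᴴ *ᵥ x) := by
  rw [quadform_eq_trace, quadform_eq_trace, ← Matrix.trace_conjTranspose,
    Matrix.conjTranspose_mul, (psd_vecMulVec x).1.eq, Matrix.trace_mul_comm]

lemma trace_mul_eq {n : Type*} [Fintype n] (M X : Matrix n n ℂ) :
    (M * X).trace = ∑ a, ∑ b, M a b * X b a := by
  simp [Matrix.trace, Matrix.diag, Matrix.mul_apply]

lemma pullback_trace {n m : Type*} [Fintype n] [DecidableEq n] [Fintype m] [DecidableEq m]
    (Φ : Matrix n n ℂ →ₗ[ℂ] Matrix m m ℂ) (N : Matrix m m ℂ) (X : Matrix n n ℂ) :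
    ((Matrix.of fun i j => (N * Φ (Matrix.single j i 1)).trace) * X).trace
      = (N * Φ X).trace := by
  rw [trace_mul_eq]
  conv_rhs => rw [Matrix.matrix_eq_sum_single X]
  simp only [map_sum, Matrix.mul_sum, Matrix.trace_sum]
  rw [Finset.sum_comm]
  refine Finset.sum_congr rfl fun b _ => Finset.sum_congr rfl fun a _ => ?_
  have h1 : Matrix.single b a (X b a) = (X b a) • Matrix.single b a (1:ℂ) := by
    rw [Matrix.smul_single, smul_eq_mul, mul_one]
  rw [h1, _root_.map_smul, Matrix.mul_smul, Matrix.trace_smul, smul_eq_mul, Matrix.of_apply, mul_comm]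

lemma psd_cauchy_schwarz {n : Type*} [Fintype n] [DecidableEq n] {M : Matrix n n ℂ}
    (hM : M.PosSemidef) (u v : n → ℂ) :
    ‖dotProduct (star u) (M *ᵥ v)‖ ^ 2
      ≤ (dotProduct (star u) (M *ᵥ u)).re * (dotProduct (star v) (M *ᵥ v)).re := by
  obtain ⟨B, rfl⟩ := psd_eq_ct_mul_self hM
  have key : ∀ x y : n → ℂ, dotProduct (star x) ((Bᴴ * B) *ᵥ y)
      = dotProduct (star (B *ᵥ x)) (B *ᵥ y) := by
    intro x y
    rw [← Matrix.mulVec_mulVec, Matrix.dotProduct_mulVec, Matrix.star_mulVec]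
  rw [key u v, key u u, key v v]
  have h := norm_inner_le_norm (𝕜 := ℂ) (WithLp.toLp 2 (B *ᵥ u))
    (WithLp.toLp 2 (B *ᵥ v))
  rw [EuclideanSpace.inner_toLp_toLp, dotProduct_comm] at h
  have h1 := inner_self_eq_norm_sq (𝕜 := ℂ) (WithLp.toLp 2 (B *ᵥ u))
  have h2 := inner_self_eq_norm_sq (𝕜 := ℂ) (WithLp.toLp 2 (B *ᵥ v))
  rw [EuclideanSpace.inner_toLp_toLp, dotProduct_comm] at h1 h2
  calc ‖dotProduct (star (B *ᵥ u)) (B *ᵥ v)‖ ^ 2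
      ≤ (‖WithLp.toLp 2 (B *ᵥ u)‖ * ‖WithLp.toLp 2 (B *ᵥ v)‖)^2 := by
        have hn : (0:ℝ) ≤ ‖dotProduct (star (B *ᵥ u)) (B *ᵥ v)‖ := norm_nonneg _
        nlinarith [h, norm_nonneg (WithLp.toLp 2 (B *ᵥ u)),
          norm_nonneg (WithLp.toLp 2 (B *ᵥ v))]
    _ = (dotProduct (star (B *ᵥ u)) (B *ᵥ u)).re * (dotProduct (star (B *ᵥ v)) (B *ᵥ v)).re := by
        rw [mul_pow, ← h1, ← h2]
        rfl

lemma real_of_im_zero {z : ℂ} (h : z.im = 0) : z = (z.re : ℂ) :=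
  Complex.ext (by simp) (by simp [h])

lemma half_add_star_re (z : ℂ) : ((1/2 : ℂ) * (z + star z)).re = z.re := by
  rw [Complex.star_def, Complex.add_conj]
  have : (1/2 : ℂ) * ((2 * z.re : ℝ) : ℂ) = (z.re : ℂ) := by push_cast; ring
  rw [this, Complex.ofReal_re]

lemma mul_self_star_eq {z : ℂ} : z * star z = ((‖z‖^2 : ℝ) : ℂ) := by
  rw [Complex.star_def, Complex.mul_conj, Complex.normSq_eq_norm_sq]

lemma trace_vecMulVec_self {n : Type*} [Fintype n] (v : n → ℂ) :
    (Matrix.vecMulVec v (star v)).trace = ((∑ i, ‖v i‖^2 : ℝ) : ℂ) := by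
  unfold Matrix.trace Matrix.diag
  rw [Complex.ofReal_sum]
  refine Finset.sum_congr rfl fun i _ => ?_
  rw [Matrix.vecMulVec_apply, Pi.star_apply, mul_self_star_eq]

lemma expand_shift_sq {n : Type*} [Fintype n] [DecidableEq n]
    (A ρ : Matrix n n ℂ) (v : ℂ) :
    (A - v • 1) * (A - v • 1) * ρ
      = A * (A * ρ) - v • (A * ρ) - v • (A * ρ) + (v * v) • ρ := by
  simp only [Matrix.sub_mul, Matrix.mul_sub, Matrix.smul_mul, Matrix.mul_smul,
    Matrix.one_mul, Matrix.mul_one, smul_sub, smul_add, smul_smul, Matrix.mul_assoc]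
  abel

lemma dot_star_self {n : Type*} [Fintype n] (v : n → ℂ) :
    dotProduct (star v) v = ((∑ i, ‖v i‖^2 : ℝ) : ℂ) := by
  unfold dotProduct
  rw [Complex.ofReal_sum]
  refine Finset.sum_congr rfl fun i _ => ?_
  rw [Pi.star_apply, mul_comm, mul_self_star_eq]

set_option maxHeartbeats 1000000 in
/-- Distinguishing argument via repeated state preparation: suppose that from a single
copy of an unknown state in `{|ψ⟩, |φ⟩}` one can produce, for every `k`, the `k`-fold
tensor power `ρ₀^{⊗k}` (from `|ψ⟩`) resp. `ρ₁^{⊗k}` (from `|φ⟩`) via a positive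
trace-preserving linear map.  Then (i) if `ρ₀ ≠ ρ₁`, for every `ε > 0` there is a
two-outcome measurement `0 ≤ M ≤ I` distinguishing the equiprobable states `|ψ⟩, |φ⟩`
with success probability at least `1 − ε`; and (ii) consequently, if `|⟨ψ|φ⟩|² = 1/2`
(so that the Helstrom bound caps the success probability at `(1 + |⟨ψ|φ⟩|)/2 < 1`),
then `ρ₀ = ρ₁`. -/
theorem repeated_preparation_distinguishing {d0 d : ℕ}
    (ψ φ : Fin d0 → ℂ)
    (hψ : ∑ i, ‖ψ i‖ ^ 2 = 1) (hφ : ∑ i, ‖φ i‖ ^ 2 = 1)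
    (ρ₀ ρ₁ : Matrix (Fin d) (Fin d) ℂ)
    (hρ₀ : ρ₀.PosSemidef) (hρ₀1 : ρ₀.trace = 1)
    (hρ₁ : ρ₁.PosSemidef) (hρ₁1 : ρ₁.trace = 1)
    (hch : ∀ k : ℕ,
      ∃ Φ : Matrix (Fin d0) (Fin d0) ℂ →ₗ[ℂ] Matrix (Fin k → Fin d) (Fin k → Fin d) ℂ,
        (∀ M : Matrix (Fin d0) (Fin d0) ℂ, M.PosSemidef → (Φ M).PosSemidef) ∧
        (∀ M : Matrix (Fin d0) (Fin d0) ℂ, (Φ M).trace = M.trace) ∧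
        Φ (Matrix.vecMulVec ψ (star ψ)) = tensPow ρ₀ k ∧
        Φ (Matrix.vecMulVec φ (star φ)) = tensPow ρ₁ k) :
    (ρ₀ ≠ ρ₁ → ∀ ε : ℝ, 0 < ε →
      ∃ M : Matrix (Fin d0) (Fin d0) ℂ,
        M.PosSemidef ∧ (1 - M).PosSemidef ∧
        1 - ε ≤ (1 / 2) * (((M * Matrix.vecMulVec ψ (star ψ)).trace).re +
          (((1 - M) * Matrix.vecMulVec φ (star φ)).trace).re))
    ∧ (‖∑ i, star (ψ i) * φ i‖ ^ 2 = 1 / 2 → ρ₀ = ρ₁) := by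
  set P := Matrix.vecMulVec ψ (star ψ) with hPdef
  set Q := Matrix.vecMulVec φ (star φ) with hQdef
  have hPtr : P.trace = 1 := by rw [hPdef, trace_vecMulVec_self, hψ]; norm_num
  have hQtr : Q.trace = 1 := by rw [hQdef, trace_vecMulVec_self, hφ]; norm_num
  have hPpsd : P.PosSemidef := psd_vecMulVec ψ
  have hQpsd : Q.PosSemidef := psd_vecMulVec φ
  have part1 : ρ₀ ≠ ρ₁ → ∀ ε : ℝ, 0 < ε →
      ∃ M : Matrix (Fin d0) (Fin d0) ℂ,
        M.PosSemidef ∧ (1 - M).PosSemidef ∧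
        1 - ε ≤ (1 / 2) * (((M * P).trace).re + (((1 - M) * Q).trace).re) := by
    intro hne ε hε
    set A := ρ₀ - ρ₁ with hAdef
    have hA : A.IsHermitian := hρ₀.1.sub hρ₁.1
    have hAA : (A * A).IsHermitian := by
      unfold Matrix.IsHermitian
      rw [Matrix.conjTranspose_mul, hA.eq]
    -- the four real parameters
    set a : ℝ := ((A * ρ₀).trace).re with hadef
    set b : ℝ := ((A * ρ₁).trace).re with hbdef
    set τ₀ : ℝ := ((A * (A * ρ₀)).trace).re with hτ₀def
    set τ₁ : ℝ := ((A * (A * ρ₁)).trace).re with hτ₁def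
    have ha : (A * ρ₀).trace = (a : ℂ) :=
      real_of_im_zero (herm_trace_mul_real hA hρ₀.1)
    have hb : (A * ρ₁).trace = (b : ℂ) :=
      real_of_im_zero (herm_trace_mul_real hA hρ₁.1)
    have hτ₀ : (A * (A * ρ₀)).trace = (τ₀ : ℂ) := by
      have h1 : A * (A * ρ₀) = (A * A) * ρ₀ := by rw [Matrix.mul_assoc]
      rw [hτ₀def, h1]
      exact real_of_im_zero (herm_trace_mul_real hAA hρ₀.1)
    have hτ₁ : (A * (A * ρ₁)).trace = (τ₁ : ℂ) := by
      have h1 : A * (A * ρ₁) = (A * A) * ρ₁ := by rw [Matrix.mul_assoc]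
      rw [hτ₁def, h1]
      exact real_of_im_zero (herm_trace_mul_real hAA hρ₁.1)
    -- a > b since tr(A†A) > 0
    have hAne : A ≠ 0 := sub_ne_zero_of_ne hne
    have htrAA : 0 < ((A * A).trace).re := by
      have h1 : (A * A).trace = (Aᴴ * A).trace := by rw [hA.eq]
      have h2 : (Aᴴ * A).trace = ∑ j, ∑ i, star (A i j) * A i j := by
        rw [trace_mul_eq]
        refine Finset.sum_congr rfl fun j _ => Finset.sum_congr rfl fun i _ => ?_
        rw [Matrix.conjTranspose_apply]
      have h3 : (Aᴴ * A).trace = ((∑ j, ∑ i, ‖A i j‖^2 : ℝ) : ℂ) := by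
        rw [h2]
        push_cast
        refine Finset.sum_congr rfl fun j _ => Finset.sum_congr rfl fun i _ => ?_
        rw [mul_comm, mul_self_star_eq]
        push_cast
        ring
      rw [h1, h3, Complex.ofReal_re]
      obtain ⟨i, j, hij⟩ : ∃ i j, A i j ≠ 0 := by
        by_contra hcon
        push_neg at hcon
        exact hAne (by ext i j; exact hcon i j)
      have hterm : 0 < ‖A i j‖^2 := pow_pos (norm_pos_iff.mpr hij) 2
      refine Finset.sum_pos' (fun j' _ => Finset.sum_nonneg fun i' _ => by positivity) ?_
      exact ⟨j, Finset.mem_univ j, Finset.sum_pos' (fun i' _ => by positivity)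
        ⟨i, Finset.mem_univ i, hterm⟩⟩
    have hba : b < a := by
      have h1 : (A * ρ₀).trace - (A * ρ₁).trace = (A * A).trace := by
        rw [← Matrix.trace_sub, ← Matrix.mul_sub, ← hAdef]
      have h2 := congrArg Complex.re h1
      rw [Complex.sub_re] at h2
      rw [hadef, hbdef]
      linarith
    set c : ℝ := (a - b)/2 with hcdef
    have hcpos : 0 < c := by rw [hcdef]; linarith
    -- variances are nonnegative
    have hvar : ∀ (ρ : Matrix (Fin d) (Fin d) ℂ) (v τ : ℝ), ρ.PosSemidef → ρ.trace = 1 →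
        (A * ρ).trace = (v : ℂ) → (A * (A * ρ)).trace = (τ : ℂ) → 0 ≤ τ - v^2 := by
      intro ρ v τ hρ hρtr hv hτ
      set C := A - (v : ℂ) • 1 with hCdef
      have hC : Cᴴ = C := by
        rw [hCdef, Matrix.conjTranspose_sub, Matrix.conjTranspose_smul, hA.eq,
          Matrix.conjTranspose_one]
        norm_num
      have hCpsd : (C * C).PosSemidef := by
        have : C * C = Cᴴ * C := by rw [hC]
        rw [this]
        exact Matrix.posSemidef_conjTranspose_mul_self C
      have h0 := trace_mul_psd_nonneg hCpsd hρ
      have hexp : (C * C) * ρ = A * (A * ρ) - (v:ℂ) • (A * ρ) - (v:ℂ) • (A * ρ)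
          + ((v:ℂ) * v) • ρ := by
        rw [hCdef]
        exact expand_shift_sq A ρ (v:ℂ)
      rw [hexp, Matrix.trace_add, Matrix.trace_sub, Matrix.trace_sub, Matrix.trace_smul,
        Matrix.trace_smul, hτ, hv, hρtr] at h0
      have hre := (Complex.nonneg_iff.mp h0).1
      simp only [smul_eq_mul, mul_one, Complex.add_re, Complex.sub_re, Complex.mul_re,
        Complex.ofReal_re, Complex.ofReal_im] at hre
      nlinarith [hre]
    have hW₀ : 0 ≤ τ₀ - a^2 := hvar ρ₀ a τ₀ hρ₀ hρ₀1 ha hτ₀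
    have hW₁ : 0 ≤ τ₁ - b^2 := hvar ρ₁ b τ₁ hρ₁ hρ₁1 hb hτ₁
    -- choose k
    obtain ⟨k, hk⟩ := exists_nat_gt (((τ₀ - a^2) + (τ₁ - b^2)) / (2 * ε * c^2))
    have hkpos : 0 < k := by
      have h0 : (0:ℝ) ≤ ((τ₀ - a^2) + (τ₁ - b^2)) / (2 * ε * c^2) := by positivity
      exact_mod_cast Nat.cast_pos.mp (lt_of_le_of_lt h0 hk)
    have hkR : (0:ℝ) < (k:ℝ) := by exact_mod_cast hkpos
    -- the measurement on the big space
    obtain ⟨N, hNpsd, h1Npsd, hN₀, hN₁⟩ := measurement_exists hA hρ₀ hρ₀1 hρ₁ hρ₁1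
      ha hb hτ₀ hτ₁ hba k hkpos
    -- the channel
    obtain ⟨Φ, hΦpos, hΦtr, hΦP, hΦQ⟩ := hch k
    -- pull back the measurement
    set M₀ : Matrix (Fin d0) (Fin d0) ℂ :=
      Matrix.of fun i j => (N * Φ (Matrix.single j i 1)).trace with hM₀def
    have hM₀tr : ∀ X, (M₀ * X).trace = (N * Φ X).trace := fun X => pullback_trace Φ N X
    set M : Matrix (Fin d0) (Fin d0) ℂ := (1/2 : ℂ) • (M₀ + M₀ᴴ) with hMdef
    have hq : ∀ x : Fin d0 → ℂ, dotProduct (star x) (M₀ *ᵥ x)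
        = (N * Φ (Matrix.vecMulVec x (star x))).trace := by
      intro x
      rw [quadform_eq_trace, hM₀tr]
    have hqpos : ∀ x : Fin d0 → ℂ, 0 ≤ dotProduct (star x) (M₀ *ᵥ x) := by
      intro x
      rw [hq]
      exact trace_mul_psd_nonneg hNpsd (hΦpos _ (psd_vecMulVec x))
    have hqstar : ∀ x : Fin d0 → ℂ, star (dotProduct (star x) (M₀ *ᵥ x))
        = dotProduct (star x) (M₀ *ᵥ x) := by
      intro x
      have h0 := hqpos x
      have him := (Complex.nonneg_iff.mp h0).2
      rw [Complex.star_def, Complex.conj_eq_iff_im]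
      exact him.symm
    have hMform : ∀ x : Fin d0 → ℂ, dotProduct (star x) (M *ᵥ x)
        = dotProduct (star x) (M₀ *ᵥ x) := by
      intro x
      rw [hMdef, Matrix.smul_mulVec, Matrix.add_mulVec, dotProduct_smul,
        dotProduct_add]
      rw [← star_quadform, hqstar]
      have : (1/2 : ℂ) • (dotProduct (star x) (M₀ *ᵥ x) + dotProduct (star x) (M₀ *ᵥ x))
          = dotProduct (star x) (M₀ *ᵥ x) := by
        rw [smul_eq_mul]; ring
      rw [this]
    have hMherm : M.IsHermitian := by
      unfold Matrix.IsHermitian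
      rw [hMdef, Matrix.conjTranspose_smul, Matrix.conjTranspose_add,
        Matrix.conjTranspose_conjTranspose]
      have hhalf : star (1/2 : ℂ) = (1/2 : ℂ) := by
        have h12 : (1/2 : ℂ) = ((1/2 : ℝ) : ℂ) := by norm_num
        rw [h12, Complex.star_def, Complex.conj_ofReal]
      rw [hhalf, add_comm]
    have hMpsd : M.PosSemidef := by
      refine .of_dotProduct_mulVec_nonneg hMherm fun x => ?_
      rw [hMform]
      exact hqpos x
    have h1Mpsd : ((1 : Matrix (Fin d0) (Fin d0) ℂ) - M).PosSemidef := by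
      refine .of_dotProduct_mulVec_nonneg ?_ fun x => ?_
      · unfold Matrix.IsHermitian
        rw [Matrix.conjTranspose_sub, Matrix.conjTranspose_one, hMherm.eq]
      · rw [Matrix.sub_mulVec, dotProduct_sub, hMform, hq, Matrix.one_mulVec]
        have h1 : dotProduct (star x) x = (Φ (Matrix.vecMulVec x (star x))).trace := by
          rw [hΦtr, trace_vecMulVec_self]
          simp only [dotProduct, Pi.star_apply]
          push_cast
          refine Finset.sum_congr rfl fun i _ => ?_
          rw [mul_comm, mul_self_star_eq]
          push_cast
          ring
        rw [h1]
        have h2 : (Φ (Matrix.vecMulVec x (star x))).trace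
            - (N * Φ (Matrix.vecMulVec x (star x))).trace
            = ((1 - N) * Φ (Matrix.vecMulVec x (star x))).trace := by
          rw [Matrix.sub_mul, Matrix.trace_sub, Matrix.one_mul]
        rw [h2]
        exact trace_mul_psd_nonneg h1Npsd (hΦpos _ (psd_vecMulVec x))
    refine ⟨M, hMpsd, h1Mpsd, ?_⟩
    -- success probability
    have hMP : ((M * P).trace).re = ((N * tensPow ρ₀ k).trace).re := by
      have h1 : (M * P).trace = (1/2 : ℂ) * ((M₀ * P).trace + star ((M₀ * P).trace)) := by
        rw [hMdef, Matrix.smul_mul, Matrix.trace_smul, smul_eq_mul, Matrix.add_mul,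
          Matrix.trace_add]
        congr 2
        rw [← Matrix.trace_conjTranspose, Matrix.conjTranspose_mul,
          hPpsd.1.eq, Matrix.trace_mul_comm]
      rw [h1, half_add_star_re, hM₀tr, hΦP]
    have hMQ : ((M * Q).trace).re = ((N * tensPow ρ₁ k).trace).re := by
      have h1 : (M * Q).trace = (1/2 : ℂ) * ((M₀ * Q).trace + star ((M₀ * Q).trace)) := by
        rw [hMdef, Matrix.smul_mul, Matrix.trace_smul, smul_eq_mul, Matrix.add_mul,
          Matrix.trace_add]
        congr 2
        rw [← Matrix.trace_conjTranspose, Matrix.conjTranspose_mul,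
          hQpsd.1.eq, Matrix.trace_mul_comm]
      rw [h1, half_add_star_re, hM₀tr, hΦQ]
    have h1MQ : (((1 - M) * Q).trace).re = 1 - ((N * tensPow ρ₁ k).trace).re := by
      rw [Matrix.sub_mul, Matrix.trace_sub, Matrix.one_mul, hQtr]
      rw [Complex.sub_re, hMQ]
      norm_num
    have hNR₀ : ((N * tensPow ρ₀ k).trace).re
        = 1 - (((1 - N) * tensPow ρ₀ k).trace).re := by
      have h1 : ((1 - N) * tensPow ρ₀ k).trace
          = (tensPow ρ₀ k).trace - (N * tensPow ρ₀ k).trace := by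
        rw [Matrix.sub_mul, Matrix.trace_sub, Matrix.one_mul]
      rw [h1, trace_tensPow hρ₀1, Complex.sub_re, Complex.one_re]
      ring
    -- arithmetic
    have harith : ((τ₀ - a^2) + (τ₁ - b^2)) / ((k:ℝ) * c^2) ≤ 2 * ε := by
      have hd : 0 < 2 * ε * c^2 := by positivity
      have h1 : ((τ₀ - a^2) + (τ₁ - b^2)) < (k:ℝ) * (2 * ε * c^2) := by
        rw [div_lt_iff₀ hd] at hk
        linarith
      rw [div_le_iff₀ (by positivity)]
      nlinarith [h1]
    rw [hMP, h1MQ, hNR₀]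
    have hsum : (((1 - N) * tensPow ρ₀ k).trace).re + ((N * tensPow ρ₁ k).trace).re
        ≤ ((τ₀ - a^2) + (τ₁ - b^2)) / ((k:ℝ) * c^2) := by
      rw [add_div]
      exact add_le_add hN₀ hN₁
    linarith
  refine ⟨part1, ?_⟩
  intro hc
  by_contra hne
  obtain ⟨M, hMpsd, h1Mpsd, hsucc⟩ := part1 hne (1/8) (by norm_num)
  have hψ1 : dotProduct (star ψ) ψ = 1 := by rw [dot_star_self, hψ]; norm_num
  have hφ1 : dotProduct (star φ) φ = 1 := by rw [dot_star_self, hφ]; norm_num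
  set x : ℝ := (dotProduct (star ψ) (M *ᵥ ψ)).re with hxdef
  set y : ℝ := (dotProduct (star φ) (M *ᵥ φ)).re with hydef
  have hMP : (M * P).trace = dotProduct (star ψ) (M *ᵥ ψ) := (quadform_eq_trace M ψ).symm
  have hMQ : (M * Q).trace = dotProduct (star φ) (M *ᵥ φ) := (quadform_eq_trace M φ).symm
  have hxy : 3/4 ≤ x - y := by
    have h := hsucc
    rw [show ((1 - M) * Q).trace = Q.trace - (M * Q).trace by
        rw [Matrix.sub_mul, Matrix.trace_sub, Matrix.one_mul]] at h
    rw [hMP, hQtr, Complex.sub_re, Complex.one_re, hMQ] at h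
    rw [← hxdef, ← hydef] at h
    linarith
  have hx0 : 0 ≤ x := (Complex.nonneg_iff.mp (hMpsd.dotProduct_mulVec_nonneg ψ)).1
  have hy0 : 0 ≤ y := (Complex.nonneg_iff.mp (hMpsd.dotProduct_mulVec_nonneg φ)).1
  have hform1 : dotProduct (star ψ) ((1 - M) *ᵥ ψ) = 1 - dotProduct (star ψ) (M *ᵥ ψ) := by
    rw [Matrix.sub_mulVec, dotProduct_sub, Matrix.one_mulVec, hψ1]
  have hform2 : dotProduct (star φ) ((1 - M) *ᵥ φ) = 1 - dotProduct (star φ) (M *ᵥ φ) := by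
    rw [Matrix.sub_mulVec, dotProduct_sub, Matrix.one_mulVec, hφ1]
  have hx1 : x ≤ 1 := by
    have h := (Complex.nonneg_iff.mp (h1Mpsd.dotProduct_mulVec_nonneg ψ)).1
    rw [hform1, Complex.sub_re, Complex.one_re] at h
    linarith
  have hy1 : y ≤ 1 := by
    have h := (Complex.nonneg_iff.mp (h1Mpsd.dotProduct_mulVec_nonneg φ)).1
    rw [hform2, Complex.sub_re, Complex.one_re] at h
    linarith
  -- Cauchy–Schwarz with M and 1 - M
  have hcs1 := psd_cauchy_schwarz hMpsd ψ φ
  have hcs2 := psd_cauchy_schwarz h1Mpsd ψ φ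
  rw [hform1, hform2, Complex.sub_re, Complex.one_re, Complex.sub_re, Complex.one_re,
    ← hxdef, ← hydef] at hcs2
  rw [← hxdef, ← hydef] at hcs1
  -- splitting the overlap
  have hsplit : dotProduct (star ψ) (M *ᵥ φ) + dotProduct (star ψ) ((1 - M) *ᵥ φ)
      = ∑ i, star (ψ i) * φ i := by
    rw [Matrix.sub_mulVec, dotProduct_sub, Matrix.one_mulVec]
    have : dotProduct (star ψ) φ = ∑ i, star (ψ i) * φ i := rfl
    rw [← this]
    ring
  have htri : ‖∑ i, star (ψ i) * φ i‖
      ≤ ‖dotProduct (star ψ) (M *ᵥ φ)‖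
        + ‖dotProduct (star ψ) ((1 - M) *ᵥ φ)‖ := by
    rw [← hsplit]
    exact norm_add_le _ _
  have hs1 : ‖dotProduct (star ψ) (M *ᵥ φ)‖ ≤ Real.sqrt (x*y) := by
    rw [← Real.sqrt_sq (norm_nonneg _)]
    exact Real.sqrt_le_sqrt hcs1
  have hs2 : ‖dotProduct (star ψ) ((1 - M) *ᵥ φ)‖
      ≤ Real.sqrt ((1-x)*(1-y)) := by
    rw [← Real.sqrt_sq (norm_nonneg _)]
    exact Real.sqrt_le_sqrt hcs2
  set s : ℝ := Real.sqrt (x*y) with hsdef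
  set t : ℝ := Real.sqrt ((1-x)*(1-y)) with htdef
  set p : ℝ := Real.sqrt (x*(1-x)) with hpdef
  set q : ℝ := Real.sqrt (y*(1-y)) with hqdef
  have hs2' : s^2 = x*y := Real.sq_sqrt (mul_nonneg hx0 hy0)
  have ht2' : t^2 = (1-x)*(1-y) := Real.sq_sqrt (mul_nonneg (by linarith) (by linarith))
  have hp2' : p^2 = x*(1-x) := Real.sq_sqrt (mul_nonneg hx0 (by linarith))
  have hq2' : q^2 = y*(1-y) := Real.sq_sqrt (mul_nonneg hy0 (by linarith))
  have hst : s * t = p * q := by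
    rw [hsdef, htdef, hpdef, hqdef, ← Real.sqrt_mul (mul_nonneg hx0 hy0),
      ← Real.sqrt_mul (mul_nonneg hx0 (by linarith : (0:ℝ) ≤ 1 - x))]
    congr 1
    ring
  have habs : ‖∑ i, star (ψ i) * φ i‖ ≤ s + t := by
    calc ‖∑ i, star (ψ i) * φ i‖ ≤ _ := htri
    _ ≤ s + t := add_le_add hs1 hs2
  have hcsq : 1/2 ≤ (s + t)^2 := by
    rw [← hc]
    have h0 := norm_nonneg (∑ i, star (ψ i) * φ i)
    nlinarith [habs, h0]
  have hpq : 2*(p*q) ≤ x*(1-x) + y*(1-y) := by nlinarith [sq_nonneg (p - q)]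
  nlinarith [hcsq, hst, hs2', ht2', hpq, hxy]
end
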